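/- arXiv:1706.01973 — 3 statements merged into one kernel-verified Lean document; each statement's English description precedes it below -/
import Mathlib

section
/- For j = 0 and all real x with -1 < x < 1, the principal value integral ∫_{-1}^{1} √(1-t²)/(t-x) dt equals -π x. -/
/-!
With `B = √(1 - x²)`, an antiderivative of `√(1 - t²) / (t - x)` on `[-1, 1] \ {x}` is
`√(1 - t²) - x arcsin t - B log (1 - x t + B √(1 - t²)) + B log |t - x|`.
Its first three terms are continuous on `[-1, 1]`, and the logarithmic singularity
`B log |t - x|` takes the same value at `x - ε` and `x + ε`, so it cancels in the principal
value; what remains tends to the boundary contribution, which is `-π x`.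
-/

open Real Filter Topology intervalIntegral Set

noncomputable def semicircleCauchyRegular (x t : ℝ) : ℝ :=
  √(1 - t ^ 2) - x * arcsin t - √(1 - x ^ 2) * log (1 - x * t + √(1 - x ^ 2) * √(1 - t ^ 2))

/-- Since `Real.log` is `log |·|`, this is a primitive on both sides of `x`. -/
noncomputable def semicircleCauchyPrimitive (x t : ℝ) : ℝ :=
  semicircleCauchyRegular x t + √(1 - x ^ 2) * log (t - x)

lemma one_sub_mul_pos_of_mem {x t : ℝ} (hx : x ∈ Ioo (-1) 1) (ht : t ∈ Icc (-1) 1) :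
    0 < 1 - x * t := by
  obtain ⟨hx₁, hx₂⟩ := hx
  obtain ⟨ht₁, ht₂⟩ := ht
  nlinarith [mul_nonneg (sub_nonneg.2 hx₂.le) (neg_le_iff_add_nonneg.1 ht₁),
    mul_nonneg (neg_le_iff_add_nonneg.1 hx₁.le) (sub_nonneg.2 ht₂)]

lemma one_sub_mul_add_sqrt_mul_sqrt_pos {x t : ℝ} (hx : x ∈ Ioo (-1) 1)
    (ht : t ∈ Icc (-1) 1) :
    0 < 1 - x * t + √(1 - x ^ 2) * √(1 - t ^ 2) := by
  have := one_sub_mul_pos_of_mem hx ht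
  positivity

lemma continuousOn_semicircleCauchyRegular {x : ℝ} (hx : x ∈ Ioo (-1) 1) :
    ContinuousOn (semicircleCauchyRegular x) (Icc (-1) 1) := by
  unfold semicircleCauchyRegular
  refine (by fun_prop : Continuous fun t => √(1 - t ^ 2) - x * arcsin t).continuousOn.sub
    (continuousOn_const.mul (ContinuousOn.log (by fun_prop) fun t ht => ?_))
  exact (one_sub_mul_add_sqrt_mul_sqrt_pos hx ht).ne'

lemma hasDerivAt_semicircleCauchyPrimitive {x t : ℝ} (hx : x ∈ Ioo (-1) 1)
    (ht : t ∈ Ioo (-1) 1) (htx : t ≠ x) :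
    HasDerivAt (semicircleCauchyPrimitive x) (√(1 - t ^ 2) / (t - x)) t := by
  set A := √(1 - t ^ 2)
  set B := √(1 - x ^ 2)
  have ht_pos : 0 < 1 - t ^ 2 := by nlinarith [ht.1, ht.2]
  have hA_pos : 0 < A := sqrt_pos.2 ht_pos
  have hA : A ^ 2 = 1 - t ^ 2 := sq_sqrt ht_pos.le
  have hB : B ^ 2 = 1 - x ^ 2 := sq_sqrt (by nlinarith [hx.1, hx.2])
  have hD_pos : 0 < 1 - x * t + B * A :=
    one_sub_mul_add_sqrt_mul_sqrt_pos hx (Ioo_subset_Icc_self ht)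
  have hsqrt : HasDerivAt (fun t : ℝ => √(1 - t ^ 2)) (-(2 * t) / (2 * A)) t :=
    (by simpa using (hasDerivAt_pow 2 t).const_sub 1 :
      HasDerivAt (fun t : ℝ => 1 - t ^ 2) (-(2 * t)) t).sqrt ht_pos.ne'
  have harcsin : HasDerivAt (fun t => x * arcsin t) (x * (1 / A)) t :=
    (hasDerivAt_arcsin (by linarith [ht.1]) (by linarith [ht.2])).const_mul x
  have hlogArg : HasDerivAt (fun t => 1 - x * t + B * √(1 - t ^ 2))
      (-x + B * (-(2 * t) / (2 * A))) t := by
    have h : HasDerivAt (fun t : ℝ => 1 - x * t) (-x) t := by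
      simpa using ((hasDerivAt_id t).const_mul x).const_sub 1
    exact h.add (hsqrt.const_mul B)
  have hlog : HasDerivAt (fun t => log (t - x)) (1 / (t - x)) t := by
    simpa using ((hasDerivAt_id t).sub_const x).log (sub_ne_zero.2 htx)
  refine (((hsqrt.sub harcsin).sub ((hlogArg.log hD_pos.ne').const_mul B)).add
    (hlog.const_mul B)).congr_deriv ?_
  have htx' := sub_ne_zero.2 htx
  have hA_ne := hA_pos.ne'
  have hD_ne : 1 - t * x + A * B ≠ 0 := by linarith
  rw [show √(1 - t ^ 2) = A from rfl]
  field_simp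
  linear_combination (B ^ 2 - (1 - t * x + A * B)) * hA + (1 - t * x) * hB

lemma integral_sqrt_one_sub_sq_div_sub {x a b : ℝ} (hx : x ∈ Ioo (-1) 1) (hab : a ≤ b)
    (hsub : Icc a b ⊆ Icc (-1) 1) (hxab : x ∉ Icc a b) :
    ∫ t in a..b, √(1 - t ^ 2) / (t - x) =
      semicircleCauchyPrimitive x b - semicircleCauchyPrimitive x a := by
  have hne : ∀ t ∈ Icc a b, t - x ≠ 0 := fun t ht =>
    sub_ne_zero.2 (ne_of_mem_of_not_mem ht hxab)
  refine integral_eq_sub_of_hasDerivAt_of_le hab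
    (((continuousOn_semicircleCauchyRegular hx).mono hsub).add
      (continuousOn_const.mul ((continuousOn_id.sub continuousOn_const).log hne)))
    (fun t ht => hasDerivAt_semicircleCauchyPrimitive hx ?_ ?_) ?_
  · exact ⟨(hsub (left_mem_Icc.2 hab)).1.trans_lt ht.1,
      ht.2.trans_le (hsub (right_mem_Icc.2 hab)).2⟩
  · exact sub_ne_zero.1 (hne t (Ioo_subset_Icc_self ht))
  · refine ContinuousOn.intervalIntegrable ?_
    rw [uIcc_of_le hab]
    exact (by fun_prop : Continuous fun t => √(1 - t ^ 2)).continuousOn.div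
      (continuousOn_id.sub continuousOn_const) hne

lemma semicircleCauchyPrimitive_one_sub_neg_one (x : ℝ) :
    semicircleCauchyPrimitive x 1 - semicircleCauchyPrimitive x (-1) = -π * x := by
  have hlog : log (-1 - x) = log (1 - x * -1) := by
    rw [← log_neg_eq_log]; ring_nf
  simp [semicircleCauchyPrimitive, semicircleCauchyRegular, hlog]
  ring

theorem stmt_1 (x : ℝ) (hx : x ∈ Set.Ioo (-1 : ℝ) 1) :
    Tendsto (fun ε : ℝ =>
        (∫ t in (-1 : ℝ)..(x - ε), Real.sqrt (1 - t ^ 2) / (t - x)) +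
        ∫ t in (x + ε)..(1 : ℝ), Real.sqrt (1 - t ^ 2) / (t - x))
      (nhdsWithin 0 (Set.Ioi 0)) (nhds (-Real.pi * x)) := by
  set R := semicircleCauchyRegular x
  have hR : ContinuousAt R x :=
    (continuousOn_semicircleCauchyRegular hx).continuousAt (Icc_mem_nhds hx.1 hx.2)
  set P := semicircleCauchyPrimitive x
  have hlim : Tendsto (fun ε => R (x - ε) - R (x + ε) + (P 1 - P (-1))) (𝓝[>] 0)
      (𝓝 (-π * x)) := by
    have h : ContinuousAt (fun ε => R (x - ε) - R (x + ε)) 0 :=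
      (hR.comp_of_eq (by fun_prop) (sub_zero x)).sub (hR.comp_of_eq (by fun_prop) (add_zero x))
    simpa [P, semicircleCauchyPrimitive_one_sub_neg_one] using
      (h.tendsto.add_const (P 1 - P (-1))).mono_left nhdsWithin_le_nhds
  refine hlim.congr' ?_
  have hsmall : Ioo 0 (min (1 + x) (1 - x)) ∈ 𝓝[>] (0 : ℝ) :=
    Ioo_mem_nhdsGT (lt_min (by linarith [hx.1]) (by linarith [hx.2]))
  filter_upwards [hsmall] with ε ⟨hε, hεx⟩
  have hε₁ := hεx.trans_le (min_le_left _ _)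
  have hε₂ := hεx.trans_le (min_le_right _ _)
  rw [integral_sqrt_one_sub_sq_div_sub hx (by linarith) (Icc_subset_Icc le_rfl (by linarith))
      (fun h => by linarith [h.2]),
    integral_sqrt_one_sub_sq_div_sub hx (by linarith) (Icc_subset_Icc (by linarith) le_rfl)
      (fun h => by linarith [h.1])]
  have hlog : log (x - ε - x) = log (x + ε - x) := by
    rw [← log_neg_eq_log]; ring_nf
  simp only [P, semicircleCauchyPrimitive, hlog, R]
  ring
end

section
/- For j = 1 and all real x with -1 < x < 1, the principal value integral ∫_{-1}^{1} √(1-t²)·t/(t-x) dt equals -π x² + π/2. -/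
/-!
Write `c = √(1 - t²)` and `w = √(1 - x²)`. Away from `t = x` the integrand `c t / (t - x)` has the
elementary primitive `t c / 2 + (1/2 - x²) arcsin t + x c + x w L(t)`, where
`L(t) = log |t - x| - log (1 - x t + w c)` is a primitive of `w / ((t - x) c)`.
The logarithmic singularities of `L` at `x - ε` and `x + ε` are both `log ε` and cancel, so the
principal value is just the difference of the primitive at `±1`, where `L` vanishes and
`arcsin` contributes `(1/2 - x²) π`.
-/

open Real Filter intervalIntegral Set Topology

theorem tendsto_pv_integral_of_hasDerivAt {f F : ℝ → ℝ} {a b x ℓ : ℝ} (hax : a < x) (hxb : x < b)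
    (hF : ContinuousOn F (Icc a b \ {x}))
    (hF' : ∀ t ∈ Ioo a b \ {x}, HasDerivAt F (f t) t)
    (hf : ContinuousOn f (Icc a b \ {x}))
    (hlim : Tendsto (fun ε => F (x - ε) - F (x + ε)) (𝓝[>] 0) (𝓝 ℓ)) :
    Tendsto (fun ε => (∫ t in a..(x - ε), f t) + ∫ t in (x + ε)..b, f t) (𝓝[>] 0)
      (𝓝 (F b - F a + ℓ)) := by
  have ftc : ∀ u v, u ≤ v → Icc u v ⊆ Icc a b \ {x} → ∫ t in u..v, f t = F v - F u := by
    intro u v huv hsub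
    refine integral_eq_sub_of_hasDerivAt_of_le huv (hF.mono hsub)
      (fun t ht => hF' t ⟨⟨?_, ?_⟩, (hsub (Ioo_subset_Icc_self ht)).2⟩) ?_
    · linarith [(hsub (left_mem_Icc.2 huv)).1.1, ht.1]
    · linarith [(hsub (right_mem_Icc.2 huv)).1.2, ht.2]
    · exact (hf.mono hsub).intervalIntegrable_of_Icc huv
  have hsmall : Ioo 0 (min (x - a) (b - x)) ∈ 𝓝[>] (0 : ℝ) :=
    Ioo_mem_nhdsGT (lt_min (by linarith) (by linarith))
  refine ((tendsto_const_nhds (x := F b - F a)).add hlim).congr' ?_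
  filter_upwards [hsmall] with ε ⟨hε, hεx⟩
  have hεa : ε < x - a := hεx.trans_le (min_le_left _ _)
  have hεb : ε < b - x := hεx.trans_le (min_le_right _ _)
  rw [ftc a (x - ε) (by linarith) fun t ht =>
      ⟨⟨ht.1, by linarith [ht.2]⟩, (by linarith [ht.2] : t ≠ x)⟩,
    ftc (x + ε) b (by linarith) fun t ht =>
      ⟨⟨by linarith [ht.1], ht.2⟩, (by linarith [ht.1] : t ≠ x)⟩]
  ring

lemma hasDerivAt_sqrt_one_sub_sq {t : ℝ} (ht : t ∈ Ioo (-1) 1) :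
    HasDerivAt (fun s => √(1 - s ^ 2)) (-t / √(1 - t ^ 2)) t := by
  have hpos : 0 < 1 - t ^ 2 := by nlinarith [ht.1, ht.2]
  convert ((hasDerivAt_pow 2 t).const_sub 1).sqrt hpos.ne' using 1
  field_simp
  ring

noncomputable def cauchyDen (x t : ℝ) : ℝ := 1 - x * t + √(1 - x ^ 2) * √(1 - t ^ 2)

/-- `log (t - x)` is `log |t - x|` by Mathlib's convention for `Real.log`, so the singular parts
at `x - ε` and `x + ε` are both `log ε`. -/
noncomputable def cauchyLog (x t : ℝ) : ℝ := log (t - x) - log (cauchyDen x t)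

lemma cauchyDen_pos {x t : ℝ} (hx : x ∈ Ioo (-1) 1) (ht : t ∈ Icc (-1) 1) :
    0 < cauchyDen x t := by
  have hxt : x * t < 1 := by
    have : |x * t| < 1 := by
      rw [abs_mul]
      exact mul_lt_one_of_nonneg_of_lt_one_left (abs_nonneg x) (abs_lt.2 hx) (abs_le.2 ht)
    exact (abs_lt.1 this).2
  unfold cauchyDen
  exact add_pos_of_pos_of_nonneg (by linarith) (by positivity)

lemma hasDerivAt_cauchyLog {x t : ℝ} (hx : x ∈ Ioo (-1) 1) (ht : t ∈ Ioo (-1) 1) (htx : t ≠ x) :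
    HasDerivAt (cauchyLog x) (√(1 - x ^ 2) / ((t - x) * √(1 - t ^ 2))) t := by
  have hc : 0 < √(1 - t ^ 2) := sqrt_pos.2 (by nlinarith [ht.1, ht.2])
  have hc2 : √(1 - t ^ 2) ^ 2 = 1 - t ^ 2 := sq_sqrt (by nlinarith [ht.1, ht.2])
  have hw2 : √(1 - x ^ 2) ^ 2 = 1 - x ^ 2 := sq_sqrt (by nlinarith [hx.1, hx.2])
  have hN := cauchyDen_pos hx (Ioo_subset_Icc_self ht)
  have hN' : HasDerivAt (cauchyDen x) (-x - √(1 - x ^ 2) * t / √(1 - t ^ 2)) t :=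
    ((((hasDerivAt_id t).const_mul x).const_sub 1).add
      ((hasDerivAt_sqrt_one_sub_sq ht).const_mul √(1 - x ^ 2))).congr_deriv (by ring)
  refine (((hasDerivAt_id t).sub_const x).log (sub_ne_zero.2 htx) |>.sub
    (hN'.log hN.ne')).congr_deriv ?_
  have htx' : t - x ≠ 0 := sub_ne_zero.2 htx
  have hN0 : 1 - t * x + √(1 - x ^ 2) * √(1 - t ^ 2) ≠ 0 := by
    unfold cauchyDen at hN; linarith
  unfold cauchyDen
  simp only [id]
  field_simp
  linear_combination √(1 - x ^ 2) * hc2 - √(1 - t ^ 2) * hw2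

lemma cauchyLog_one (x : ℝ) : cauchyLog x 1 = 0 := by
  simp [cauchyLog, cauchyDen]

lemma cauchyLog_neg_one (x : ℝ) : cauchyLog x (-1) = 0 := by
  rw [cauchyLog, show -1 - x = -(1 + x) by ring, log_neg_eq_log, cauchyDen]
  norm_num

lemma ContinuousAt.tendsto_sub_comp_sub_add {h : ℝ → ℝ} {x : ℝ} (hh : ContinuousAt h x) :
    Tendsto (fun ε => h (x - ε) - h (x + ε)) (𝓝 0) (𝓝 0) := by
  have hm : Tendsto (fun ε : ℝ => x - ε) (𝓝 0) (𝓝 x) := by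
    simpa using (continuous_const.sub continuous_id).tendsto (0 : ℝ) (f := fun ε : ℝ => x - ε)
  have hp : Tendsto (fun ε : ℝ => x + ε) (𝓝 0) (𝓝 x) := by
    simpa using (continuous_const.add continuous_id).tendsto (0 : ℝ) (f := fun ε : ℝ => x + ε)
  simpa using (hh.tendsto.comp hm).sub (hh.tendsto.comp hp)

lemma tendsto_cauchyLog_sub {x : ℝ} (hx : x ∈ Ioo (-1) 1) :
    Tendsto (fun ε => cauchyLog x (x - ε) - cauchyLog x (x + ε)) (𝓝 0) (𝓝 0) := by
  have hN : ContinuousAt (fun t => log (cauchyDen x t)) x := by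
    refine ContinuousAt.log ?_ (cauchyDen_pos hx (Ioo_subset_Icc_self hx)).ne'
    unfold cauchyDen
    fun_prop
  have hlim := hN.tendsto_sub_comp_sub_add.neg
  rw [neg_zero] at hlim
  refine hlim.congr fun ε => ?_
  simp only [cauchyLog, sub_sub_cancel_left, add_sub_cancel_left, log_neg_eq_log]
  ring

/-- From `√(1-t²) t/(t-x) = √(1-t²) - x (t+x)/√(1-t²) + x (1-x²)/((t-x)√(1-t²))`. -/
noncomputable def pvPrimitive (x t : ℝ) : ℝ :=
  t * √(1 - t ^ 2) / 2 + (1 / 2 - x ^ 2) * arcsin t + x * √(1 - t ^ 2)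
    + x * √(1 - x ^ 2) * cauchyLog x t

lemma continuous_pvPrimitive_regularPart (x : ℝ) :
    Continuous fun t => t * √(1 - t ^ 2) / 2 + (1 / 2 - x ^ 2) * arcsin t + x * √(1 - t ^ 2) := by
  have := continuous_arcsin
  fun_prop

lemma continuousOn_cauchyLog {x : ℝ} (hx : x ∈ Ioo (-1) 1) :
    ContinuousOn (cauchyLog x) (Icc (-1) 1 \ {x}) := by
  refine ContinuousOn.sub (fun t ht => ?_) (fun t ht => ?_)
  · exact (continuousAt_id.sub continuousAt_const).log (sub_ne_zero.2 ht.2) |>.continuousWithinAt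
  · refine ContinuousAt.continuousWithinAt (ContinuousAt.log ?_ (cauchyDen_pos hx ht.1).ne')
    unfold cauchyDen
    fun_prop

lemma hasDerivAt_pvPrimitive {x t : ℝ} (hx : x ∈ Ioo (-1) 1) (ht : t ∈ Ioo (-1) 1) (htx : t ≠ x) :
    HasDerivAt (pvPrimitive x) (√(1 - t ^ 2) * t / (t - x)) t := by
  have hc : 0 < √(1 - t ^ 2) := sqrt_pos.2 (by nlinarith [ht.1, ht.2])
  have hc2 : √(1 - t ^ 2) ^ 2 = 1 - t ^ 2 := sq_sqrt (by nlinarith [ht.1, ht.2])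
  have hw2 : √(1 - x ^ 2) ^ 2 = 1 - x ^ 2 := sq_sqrt (by nlinarith [hx.1, hx.2])
  have htx' : t - x ≠ 0 := sub_ne_zero.2 htx
  have hsqrt := hasDerivAt_sqrt_one_sub_sq ht
  refine (((((hasDerivAt_id t).mul hsqrt).div_const 2).add
    ((hasDerivAt_arcsin (by linarith [ht.1]) (by linarith [ht.2])).const_mul (1 / 2 - x ^ 2))).add
    (hsqrt.const_mul x) |>.add ((hasDerivAt_cauchyLog hx ht htx).const_mul (x * √(1 - x ^ 2))))
    |>.congr_deriv ?_
  simp only [id]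
  field_simp
  linear_combination (-t - x) * hc2 + 2 * x * hw2

lemma pvPrimitive_one_sub_neg_one (x : ℝ) :
    pvPrimitive x 1 - pvPrimitive x (-1) = -π * x ^ 2 + π / 2 := by
  simp only [pvPrimitive, cauchyLog_one, cauchyLog_neg_one, arcsin_one, arcsin_neg_one]
  norm_num
  ring

lemma tendsto_pvPrimitive_sub {x : ℝ} (hx : x ∈ Ioo (-1) 1) :
    Tendsto (fun ε => pvPrimitive x (x - ε) - pvPrimitive x (x + ε)) (𝓝 0) (𝓝 0) := by
  have hreg := (continuous_pvPrimitive_regularPart x).continuousAt (x := x)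
  have h := hreg.tendsto_sub_comp_sub_add.add
    ((tendsto_cauchyLog_sub hx).const_mul (x * √(1 - x ^ 2)))
  rw [mul_zero, add_zero] at h
  refine h.congr fun ε => ?_
  simp only [pvPrimitive]
  ring

theorem stmt_2 (x : ℝ) (hx : x ∈ Set.Ioo (-1 : ℝ) 1) :
    Tendsto (fun ε : ℝ =>
        (∫ t in (-1 : ℝ)..(x - ε), Real.sqrt (1 - t ^ 2) * t / (t - x)) +
        ∫ t in (x + ε)..(1 : ℝ), Real.sqrt (1 - t ^ 2) * t / (t - x))
      (nhdsWithin 0 (Set.Ioi 0)) (nhds (-Real.pi * x ^ 2 + Real.pi / 2)) := by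
  have hF : ContinuousOn (pvPrimitive x) (Icc (-1) 1 \ {x}) :=
    (continuous_pvPrimitive_regularPart x).continuousOn.add
      (continuousOn_const.mul (continuousOn_cauchyLog hx))
  have hf : ContinuousOn (fun t => √(1 - t ^ 2) * t / (t - x)) (Icc (-1) 1 \ {x}) :=
    (by fun_prop : Continuous fun t => √(1 - t ^ 2) * t).continuousOn.div (by fun_prop)
      fun t ht => sub_ne_zero.2 ht.2
  have h := tendsto_pv_integral_of_hasDerivAt hx.1 hx.2 hF
    (fun t ht => hasDerivAt_pvPrimitive hx ht.1 ht.2) hf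
    ((tendsto_pvPrimitive_sub hx).mono_left nhdsWithin_le_nhds)
  rwa [pvPrimitive_one_sub_neg_one, add_zero] at h
end

section
/- If ψ : [-1,1] → ℝ is a polynomial of degree m (restricted to [-1,1]), then the principal value integral x ↦ ∫_{-1}^{1} √(1-t²)ψ(t)/(t-x) dt is a polynomial in x of degree at most m+1 on (-1,1). -/
open Real Filter Polynomial intervalIntegral
open Set Topology

/-!
Write `T_ε g (x)` for the integral of `g(t) / (t - x)` over `[-1, 1]` with `(x - ε, x + ε)`
removed. The identity `t g(t) / (t - x) = g(t) + x g(t) / (t - x)` gives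
`T_ε (t g) (x) = ∫_{|t - x| ≥ ε} g + x T_ε g (x)`, so by Horner's scheme the principal value of
`w p` is a polynomial of degree at most `deg p + deg r` whenever the principal value of the
continuous weight `w` is a polynomial `r`. For `w(t) = √(1 - t²)` an explicit primitive built from
`arcsin` and `log` shows that the principal value is `-π x`.
-/

noncomputable def truncPV (g : ℝ → ℝ) (x ε : ℝ) : ℝ :=
  (∫ t in (-1 : ℝ)..(x - ε), g t / (t - x)) + ∫ t in (x + ε)..(1 : ℝ), g t / (t - x)

section TruncPV

variable {g h : ℝ → ℝ} {x ε : ℝ}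

lemma intervalIntegrable_div_sub (hg : Continuous g) {a b : ℝ} (hx : x ∉ uIcc a b) :
    IntervalIntegrable (fun t => g t / (t - x)) MeasureTheory.volume a b :=
  (hg.continuousOn.div (continuous_id.sub continuous_const).continuousOn
    fun _ ht => sub_ne_zero.2 (ne_of_mem_of_not_mem ht hx)).intervalIntegrable

lemma notMem_uIcc_neg_one_sub (hx : x ∈ Ioo (-1 : ℝ) 1) (hε : 0 < ε) : x ∉ uIcc (-1) (x - ε) :=
  notMem_uIcc_of_gt hx.1 (by linarith)

lemma notMem_uIcc_add_one (hx : x ∈ Ioo (-1 : ℝ) 1) (hε : 0 < ε) : x ∉ uIcc (x + ε) 1 :=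
  notMem_uIcc_of_lt (by linarith) hx.2

lemma truncPV_add (hg : Continuous g) (hh : Continuous h) (hx : x ∈ Ioo (-1 : ℝ) 1)
    (hε : 0 < ε) : truncPV (fun t => g t + h t) x ε = truncPV g x ε + truncPV h x ε := by
  have hL := notMem_uIcc_neg_one_sub hx hε
  have hR := notMem_uIcc_add_one hx hε
  simp only [truncPV, add_div]
  rw [integral_add (intervalIntegrable_div_sub hg hL) (intervalIntegrable_div_sub hh hL),
    integral_add (intervalIntegrable_div_sub hg hR) (intervalIntegrable_div_sub hh hR)]
  ring

lemma truncPV_const_mul (c : ℝ) : truncPV (fun t => c * g t) x ε = c * truncPV g x ε := by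
  simp only [truncPV, mul_div_assoc, integral_const_mul, mul_add]

lemma truncPV_mul_sub_self (hx : x ∈ Ioo (-1 : ℝ) 1) (hε : 0 < ε) :
    truncPV (fun t => g t * (t - x)) x ε =
      (∫ t in (-1 : ℝ)..(x - ε), g t) + ∫ t in (x + ε)..(1 : ℝ), g t := by
  have cancel : ∀ {a b : ℝ}, x ∉ uIcc a b →
      ∫ t in a..b, g t * (t - x) / (t - x) = ∫ t in a..b, g t :=
    fun hab => integral_congr fun t ht =>
      mul_div_cancel_right₀ _ (sub_ne_zero.2 (ne_of_mem_of_not_mem ht hab))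
  rw [truncPV, cancel (notMem_uIcc_neg_one_sub hx hε), cancel (notMem_uIcc_add_one hx hε)]

lemma truncPV_mul_id (hg : Continuous g) (hx : x ∈ Ioo (-1 : ℝ) 1) (hε : 0 < ε) :
    truncPV (fun t => g t * t) x ε =
      (∫ t in (-1 : ℝ)..(x - ε), g t) + (∫ t in (x + ε)..(1 : ℝ), g t) + x * truncPV g x ε := by
  have split : (fun t => g t * t) = fun t => g t * (t - x) + x * g t := by
    ext t; ring
  rw [split, truncPV_add (by fun_prop) (by fun_prop) hx hε, truncPV_const_mul,
    truncPV_mul_sub_self hx hε]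

lemma tendsto_integral_add_integral (hg : Continuous g) (a b x : ℝ) :
    Tendsto (fun ε => (∫ t in a..(x - ε), g t) + ∫ t in (x + ε)..b, g t) (𝓝 0)
      (𝓝 (∫ t in a..b, g t)) := by
  have hint := hg.intervalIntegrable (μ := MeasureTheory.volume)
  set P := fun u => ∫ t in a..u, g t
  have hP : Continuous P := continuous_primitive hint a
  have key : Tendsto (fun ε => P (x - ε) + (P b - P (x + ε))) (𝓝 0)
      (𝓝 (P (x - 0) + (P b - P (x + 0)))) := by
    apply Continuous.tendsto
    fun_prop
  simp only [sub_zero, add_zero, add_sub_cancel] at key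
  refine key.congr fun ε => ?_
  rw [integral_interval_sub_left (hint a b) (hint a (x + ε))]

end TruncPV

section PolynomialWeight

variable {w : ℝ → ℝ} {r : ℝ[X]}

lemma tendsto_truncPV_mul_X_add_C (hw : Continuous w)
    (hr : ∀ x ∈ Ioo (-1 : ℝ) 1, Tendsto (truncPV w x) (𝓝[>] 0) (𝓝 (r.eval x)))
    {p q : ℝ[X]}
    (hq : ∀ x ∈ Ioo (-1 : ℝ) 1,
      Tendsto (truncPV (fun t => w t * p.eval t) x) (𝓝[>] 0) (𝓝 (q.eval x)))
    (a : ℝ) {x : ℝ} (hx : x ∈ Ioo (-1 : ℝ) 1) :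
    Tendsto (truncPV (fun t => w t * (p * X + C a).eval t) x) (𝓝[>] 0)
      (𝓝 ((C (∫ t in (-1 : ℝ)..1, w t * p.eval t) + X * q + C a * r).eval x)) := by
  have hwp : Continuous fun t => w t * p.eval t := hw.mul p.continuous
  have horner : (fun t => w t * (p * X + C a).eval t) =
      fun t => (w t * p.eval t) * t + a * w t := by
    ext t; simp only [eval_add, eval_mul, eval_X, eval_C]; ring
  have hlim := ((tendsto_integral_add_integral hwp (-1) 1 x).mono_left nhdsWithin_le_nhds).add
    (((hq x hx).const_mul x).add ((hr x hx).const_mul a))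
  have heval : (C (∫ t in (-1 : ℝ)..1, w t * p.eval t) + X * q + C a * r).eval x =
      (∫ t in (-1 : ℝ)..1, w t * p.eval t) + (x * q.eval x + a * r.eval x) := by
    simp only [eval_add, eval_mul, eval_C, eval_X]; ring
  rw [heval, horner]
  refine hlim.congr' ?_
  filter_upwards [self_mem_nhdsWithin] with ε (hε : 0 < ε)
  rw [truncPV_add (by fun_prop) (by fun_prop) hx hε, truncPV_const_mul,
    truncPV_mul_id hwp hx hε]
  ring

theorem exists_tendsto_truncPV_mul_eval (hw : Continuous w)
    (hr : ∀ x ∈ Ioo (-1 : ℝ) 1, Tendsto (truncPV w x) (𝓝[>] 0) (𝓝 (r.eval x))) (p : ℝ[X]) :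
    ∃ q : ℝ[X], q.natDegree ≤ p.natDegree + r.natDegree ∧ ∀ x ∈ Ioo (-1 : ℝ) 1,
      Tendsto (truncPV (fun t => w t * p.eval t) x) (𝓝[>] 0) (𝓝 (q.eval x)) := by
  suffices ∀ n, ∀ p : ℝ[X], p.natDegree ≤ n → ∃ q : ℝ[X], q.natDegree ≤ n + r.natDegree ∧
      ∀ x ∈ Ioo (-1 : ℝ) 1,
        Tendsto (truncPV (fun t => w t * p.eval t) x) (𝓝[>] 0) (𝓝 (q.eval x)) from
    this _ p le_rfl
  intro n
  induction n with
  | zero =>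
    intro p hp
    obtain ⟨a, rfl⟩ : ∃ a, p = C a := ⟨_, eq_C_of_natDegree_le_zero hp⟩
    refine ⟨C a * r, by simpa using natDegree_C_mul_le a r, fun x hx => ?_⟩
    have hconst : (fun t => w t * (C a).eval t) = fun t => a * w t := by
      ext t; rw [eval_C, mul_comm]
    rw [hconst, eval_mul, eval_C]
    exact ((hr x hx).const_mul a).congr fun ε => (truncPV_const_mul a).symm
  | succ n ih =>
    intro p hp
    obtain ⟨q, hq_deg, hq⟩ := ih p.divX (by rw [natDegree_divX_eq_natDegree_tsub_one]; omega)
    refine ⟨C (∫ t in (-1 : ℝ)..1, w t * p.divX.eval t) + X * q + C (p.coeff 0) * r, ?_,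
      fun x hx => ?_⟩
    · refine natDegree_add_le_of_degree_le (natDegree_add_le_of_degree_le ?_ ?_) ?_
      · simp
      · exact (natDegree_mul_le_of_le natDegree_X_le hq_deg).trans (by omega)
      · exact (natDegree_C_mul_le _ _).trans (by omega)
    · simpa only [divX_mul_X_add] using tendsto_truncPV_mul_X_add_C hw hr hq (p.coeff 0) hx

end PolynomialWeight

section Semicircle

noncomputable def semicirclePrimitiveReg (x t : ℝ) : ℝ :=
  √(1 - t ^ 2) - x * arcsin t - √(1 - x ^ 2) * log (1 - x * t + √(1 - x ^ 2) * √(1 - t ^ 2))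

/-- As `Real.log (t - x) = log |t - x|`, this is a primitive of `√(1 - t²) / (t - x)` on both sides
of `x`. -/
noncomputable def semicirclePrimitive (x t : ℝ) : ℝ :=
  semicirclePrimitiveReg x t + √(1 - x ^ 2) * log (t - x)

variable {x : ℝ}

lemma semicirclePrimitiveReg_log_arg_pos (hx : x ∈ Ioo (-1 : ℝ) 1) {t : ℝ}
    (ht : t ∈ Icc (-1 : ℝ) 1) : 0 < 1 - x * t + √(1 - x ^ 2) * √(1 - t ^ 2) := by
  obtain ⟨hx₁, hx₂⟩ := hx
  obtain ⟨ht₁, ht₂⟩ := ht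
  have hroots : 0 ≤ √(1 - x ^ 2) * √(1 - t ^ 2) := by positivity
  nlinarith [mul_nonneg (sub_nonneg.2 hx₂.le) (neg_le_iff_add_nonneg.1 ht₁),
    mul_nonneg (neg_le_iff_add_nonneg.1 hx₁.le) (sub_nonneg.2 ht₂)]

lemma continuousOn_semicirclePrimitiveReg (hx : x ∈ Ioo (-1 : ℝ) 1) :
    ContinuousOn (semicirclePrimitiveReg x) (Icc (-1) 1) := by
  unfold semicirclePrimitiveReg
  refine ContinuousOn.sub (by fun_prop) (continuousOn_const.mul (ContinuousOn.log ?_ ?_))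
  · fun_prop
  · exact fun t ht => (semicirclePrimitiveReg_log_arg_pos hx ht).ne'

lemma semicirclePrimitive_sub_sub_add (x ε : ℝ) :
    semicirclePrimitive x (x - ε) - semicirclePrimitive x (x + ε) =
      semicirclePrimitiveReg x (x - ε) - semicirclePrimitiveReg x (x + ε) := by
  rw [semicirclePrimitive, semicirclePrimitive, show x - ε - x = -ε by ring,
    show x + ε - x = ε by ring, log_neg_eq_log]
  ring

lemma semicirclePrimitive_one_sub_neg_one :
    semicirclePrimitive x 1 - semicirclePrimitive x (-1) = -(π * x) := by
  simp only [semicirclePrimitive, semicirclePrimitiveReg, show (-1 : ℝ) - x = -(1 + x) by ring,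
    log_neg_eq_log, arcsin_one, arcsin_neg_one]
  norm_num
  ring

lemma hasDerivAt_semicirclePrimitive (hx : x ∈ Ioo (-1 : ℝ) 1) {t : ℝ} (ht : t ∈ Ioo (-1 : ℝ) 1)
    (htx : t ≠ x) : HasDerivAt (semicirclePrimitive x) (√(1 - t ^ 2) / (t - x)) t := by
  have hA := semicirclePrimitiveReg_log_arg_pos hx (Ioo_subset_Icc_self ht)
  obtain ⟨hx₁, hx₂⟩ := hx
  obtain ⟨ht₁, ht₂⟩ := ht
  set s := √(1 - x ^ 2)
  have hu : √(1 - t ^ 2) ≠ 0 := (sqrt_pos.2 (by nlinarith)).ne'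
  have hu2 : √(1 - t ^ 2) ^ 2 = 1 - t ^ 2 := sq_sqrt (by nlinarith)
  have hs2 : s ^ 2 = 1 - x ^ 2 := sq_sqrt (by nlinarith)
  have htx' : t - x ≠ 0 := sub_ne_zero.2 htx
  have dsqrt : HasDerivAt (fun t => √(1 - t ^ 2)) (-(2 * t) / (2 * √(1 - t ^ 2))) t := by
    simpa using ((hasDerivAt_pow 2 t).const_sub 1).sqrt (by nlinarith)
  have darcsin := (hasDerivAt_arcsin ht₁.ne' ht₂.ne).const_mul x
  have dlin : HasDerivAt (fun t => 1 - x * t) (-x) t := by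
    simpa using ((hasDerivAt_id t).const_mul x).const_sub 1
  have dlogA := (dlin.add (dsqrt.const_mul s)).log hA.ne'
  have dlog : HasDerivAt (fun t => log (t - x)) (1 / (t - x)) t := by
    simpa using ((hasDerivAt_id t).sub_const x).log htx'
  refine (((dsqrt.sub darcsin).sub (dlogA.const_mul s)).add (dlog.const_mul s)).congr_deriv ?_
  have hA' : 1 - t * x + √(1 - t ^ 2) * s ≠ 0 := by linarith
  simp only [Pi.add_apply]
  field_simp
  linear_combination (1 - t * x) * hs2
    + (s ^ 2 - (1 - t * x + √(1 - t ^ 2) * s)) * hu2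

lemma integral_sqrt_div_sub (hx : x ∈ Ioo (-1 : ℝ) 1) {a b : ℝ} (hab : a ≤ b)
    (hsub : Icc a b ⊆ Icc (-1) 1) (hxab : x ∉ Icc a b) :
    ∫ t in a..b, √(1 - t ^ 2) / (t - x) = semicirclePrimitive x b - semicirclePrimitive x a := by
  have hx_ne : ∀ t ∈ Icc a b, t - x ≠ 0 := fun t ht => sub_ne_zero.2 (ne_of_mem_of_not_mem ht hxab)
  refine integral_eq_sub_of_hasDerivAt_of_le hab ?_ (fun t ht => ?_) ?_
  · exact ((continuousOn_semicirclePrimitiveReg hx).mono hsub).add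
      (continuousOn_const.mul ((continuous_id.sub continuous_const).continuousOn.log hx_ne))
  · have ht' : t ∈ Ioo (-1 : ℝ) 1 := ⟨(hsub (left_mem_Icc.2 hab)).1.trans_lt ht.1,
      ht.2.trans_le (hsub (right_mem_Icc.2 hab)).2⟩
    exact hasDerivAt_semicirclePrimitive hx ht' (sub_ne_zero.1 (hx_ne t (Ioo_subset_Icc_self ht)))
  · exact intervalIntegrable_div_sub (by fun_prop) (by rwa [uIcc_of_le hab])

theorem tendsto_truncPV_sqrt (hx : x ∈ Ioo (-1 : ℝ) 1) :
    Tendsto (truncPV (fun t => √(1 - t ^ 2)) x) (𝓝[>] 0) (𝓝 (-(π * x))) := by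
  have hReg : ContinuousAt (semicirclePrimitiveReg x) x :=
    (continuousOn_semicirclePrimitiveReg hx).continuousAt (Icc_mem_nhds hx.1 hx.2)
  have hcancel : Tendsto
      (fun ε => semicirclePrimitiveReg x (x - ε) - semicirclePrimitiveReg x (x + ε)) (𝓝 0)
      (𝓝 0) := by
    have hm : Tendsto (fun ε : ℝ => x - ε) (𝓝 0) (𝓝 x) := by
      simpa using tendsto_const_nhds.sub (tendsto_id (x := 𝓝 (0 : ℝ)))
    have hp : Tendsto (fun ε : ℝ => x + ε) (𝓝 0) (𝓝 x) := by
      simpa using tendsto_const_nhds.add (tendsto_id (x := 𝓝 (0 : ℝ)))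
    simpa using (hReg.tendsto.comp hm).sub (hReg.tendsto.comp hp)
  have hlim : Tendsto (fun ε => -(π * x) +
      (semicirclePrimitiveReg x (x - ε) - semicirclePrimitiveReg x (x + ε))) (𝓝[>] 0)
      (𝓝 (-(π * x))) := by
    simpa using (hcancel.const_add (-(π * x))).mono_left nhdsWithin_le_nhds
  refine hlim.congr' ?_
  filter_upwards [Ioo_mem_nhdsGT (lt_min (by linarith [hx.1] : 0 < x + 1) (sub_pos.2 hx.2))]
    with ε ⟨hε, hεδ⟩
  have hε₁ : ε < x + 1 := hεδ.trans_le (min_le_left _ _)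
  have hε₂ : ε < 1 - x := hεδ.trans_le (min_le_right _ _)
  rw [truncPV, integral_sqrt_div_sub hx (by linarith) (Icc_subset_Icc le_rfl (by linarith))
      (fun h => by linarith [h.2]),
    integral_sqrt_div_sub hx (by linarith) (Icc_subset_Icc (by linarith) le_rfl)
      (fun h => by linarith [h.1])]
  linarith [semicirclePrimitive_one_sub_neg_one (x := x), semicirclePrimitive_sub_sub_add x ε]

end Semicircle

/-- If ψ is a polynomial of degree m, then the principal-value integral
x ↦ ∫₋₁¹ √(1-t²)ψ(t)/(t-x) dt agrees on (-1,1) with a polynomial of degree at most m+1. -/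
theorem stmt_11 (m : ℕ) (p : Polynomial ℝ) (hp : p.natDegree = m) (F : ℝ → ℝ)
    (hF : ∀ x ∈ Set.Ioo (-1 : ℝ) 1,
      Tendsto (fun ε : ℝ =>
          (∫ t in (-1 : ℝ)..(x - ε), Real.sqrt (1 - t ^ 2) * p.eval t / (t - x)) +
          ∫ t in (x + ε)..(1 : ℝ), Real.sqrt (1 - t ^ 2) * p.eval t / (t - x))
        (nhdsWithin 0 (Set.Ioi 0)) (nhds (F x))) :
    ∃ q : Polynomial ℝ, q.natDegree ≤ m + 1 ∧
      ∀ x ∈ Set.Ioo (-1 : ℝ) 1, F x = q.eval x := by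
  have hsemicircle : ∀ x ∈ Ioo (-1 : ℝ) 1, Tendsto (truncPV (fun t => √(1 - t ^ 2)) x)
      (𝓝[>] 0) (𝓝 ((-(C π * X)).eval x)) := fun x hx => by
    simpa using tendsto_truncPV_sqrt hx
  have hr_deg : (-(C π * X)).natDegree ≤ 1 := by
    rw [natDegree_neg]
    exact (natDegree_C_mul_le _ _).trans natDegree_X_le
  obtain ⟨q, hq_deg, hq⟩ := exists_tendsto_truncPV_mul_eval (by fun_prop) hsemicircle p
  exact ⟨q, by omega, fun x hx => tendsto_nhds_unique (hF x hx) (hq x hx)⟩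
end
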